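/- arXiv:1603.03071 — 7 statements merged into one kernel-verified Lean document; each statement's English description precedes it below -/
import Mathlib

section
/- Let A be a finite subset of an additive abelian group G such that every sum b₁ + b₂ of two distinct elements b₁, b₂ ∈ A again lies in A. If there exists a nonzero a ∈ A with 2a ∈ A, then A is a subgroup of G. -/
theorem stmt_0 {G : Type*} [AddCommGroup G] (A : Finset G)
    (hsum : ∀ b₁ ∈ A, ∀ b₂ ∈ A, b₁ ≠ b₂ → b₁ + b₂ ∈ A)
    (ha : ∃ a ∈ A, a ≠ 0 ∧ a + a ∈ A) :
    ∃ H : AddSubgroup G, (A : Set G) = (H : Set G) := by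
  classical
  obtain ⟨a, haA, ha0, haa⟩ := ha
  have hadd_a : ∀ b ∈ A, b + a ∈ A := by
    intro b hb
    rcases eq_or_ne b a with rfl | h
    · exact haa
    · exact hsum b hb a haA h
  have himg : A.image (· + a) = A := by
    apply Finset.eq_of_subset_of_card_le
    · intro x hx
      simp only [Finset.mem_image] at hx
      obtain ⟨b, hb, rfl⟩ := hx
      exact hadd_a b hb
    · rw [Finset.card_image_of_injective _ (add_left_injective a)]
  have hsub_a : ∀ b ∈ A, b - a ∈ A := by
    intro b hb
    have hmem : b ∈ A.image (· + a) := himg.symm ▸ hb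
    simp only [Finset.mem_image] at hmem
    obtain ⟨c, hc, hcb⟩ := hmem
    have : c = b - a := by rw [← hcb]; abel
    rwa [← this]
  have haddA : ∀ b ∈ A, ∀ c ∈ A, b + c ∈ A := by
    intro b hb c hc
    rcases eq_or_ne b c with rfl | h
    · have h1 : b + (b + a) ∈ A := by
        apply hsum b hb (b + a) (hadd_a b hb)
        intro h
        exact ha0 (by linear_combination (norm := abel) h.symm)
      have h2 := hsub_a _ h1
      have : b + (b + a) - a = b + b := by abel
      rwa [this] at h2
    · exact hsum b hb c hc h
  have hmul : ∀ b ∈ A, ∀ n : ℕ, (n + 1) • b ∈ A := by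
    intro b hb n
    induction n with
    | zero => simpa using hb
    | succ k ih =>
        have : (k + 1 + 1) • b = (k + 1) • b + b := by rw [succ_nsmul]
        rw [this]
        exact haddA _ ih _ hb
  have key : ∀ b ∈ A, (0 : G) ∈ A ∧ -b ∈ A := by
    intro b hb
    obtain ⟨m, n, hmn, heq⟩ := Finite.exists_ne_map_eq_of_infinite
      (fun n : ℕ => (⟨(n + 1) • b, hmul b hb n⟩ : {x // x ∈ A}))
    wlog hlt : m < n generalizing m n
    · exact this n m hmn.symm heq.symm (by omega)
    have heq' : (m + 1) • b = (n + 1) • b := congrArg Subtype.val heq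
    set k := n - m with hk
    have hk1 : 1 ≤ k := by omega
    have hzero : k • b = 0 := by
      have : (n + 1) • b = (m + 1) • b + k • b := by
        rw [← add_nsmul]; congr 1; omega
      rw [← heq'] at this
      exact (left_eq_add.mp this)
    have h0A : (0 : G) ∈ A := by
      rw [← hzero]
      have : k • b = (k - 1 + 1) • b := by congr 1; omega
      rw [this]; exact hmul b hb _
    refine ⟨h0A, ?_⟩
    rcases eq_or_lt_of_le hk1 with h1 | h2
    · have : b = 0 := by
        rw [← h1] at hzero; simpa using hzero
      rw [this, neg_zero]; exact h0A
    · have hnb : -b = (k - 1) • b := by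
        have h3 : (k - 1) • b + b = k • b := by
          rw [← succ_nsmul]; congr 1; omega
        rw [hzero] at h3
        exact neg_eq_of_add_eq_zero_left h3
      rw [hnb]
      have : (k - 1) • b = (k - 2 + 1) • b := by congr 1; omega
      rw [this]; exact hmul b hb _
  refine ⟨{ carrier := A,
            add_mem' := fun hx hy => haddA _ hx _ hy,
            zero_mem' := (key a haA).1,
            neg_mem' := fun hx => (key _ hx).2 }, rfl⟩
end

section
/- Let A be a finite nonempty subset of an additive abelian group G such that every sum of two distinct elements of A lies in A, no nonzero a ∈ A satisfies 2a ∈ A, and there exists b ∈ A with 2b ≠ 0. Then A equals one of {b}, {b, 0}, or {b, 0, −b}. -/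
theorem stmt_2 {G : Type*} [AddCommGroup G] (A : Finset G) (hne : A.Nonempty)
    (hsum : ∀ b₁ ∈ A, ∀ b₂ ∈ A, b₁ ≠ b₂ → b₁ + b₂ ∈ A)
    (hdouble : ∀ a ∈ A, a ≠ 0 → a + a ∉ A)
    (hb : ∃ b ∈ A, b + b ≠ 0) :
    ∃ b : G, (A : Set G) = {b} ∨ (A : Set G) = {b, 0} ∨ (A : Set G) = {b, 0, -b} := by
  obtain ⟨b, hbA, hb2⟩ := hb
  have hbne : b ≠ 0 := by rintro rfl; simp at hb2
  have key : ∀ a ∈ A, a = b ∨ a = 0 ∨ a = -b := by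
    intro a ha
    by_contra h
    push_neg at h
    obtain ⟨h1, h2, h3⟩ := h
    have hab : a + b ∈ A := hsum a ha b hbA h1
    have habne : a + b ≠ b := fun h => h2 (by
      have := add_right_cancel (b := b) (a := a) (c := 0) (by simpa using h); exact this)
    have ha2b : a + b + b ∈ A := hsum (a + b) hab b hbA habne
    have hne2 : a ≠ a + b + b := by
      intro h
      apply hb2
      have : a + 0 = a + (b + b) := by rw [add_zero]; nth_rewrite 1 [h]; abel
      exact (add_left_cancel this).symm
    have hs : a + (a + b + b) ∈ A := hsum a ha _ ha2b hne2
    have habz : a + b ≠ 0 := fun h => h3 (eq_neg_of_add_eq_zero_left h)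
    have := hdouble (a + b) hab habz
    apply this
    have : a + (a + b + b) = (a + b) + (a + b) := by abel
    rwa [this] at hs
  have hbnb : b ≠ -b := fun h => hb2 (by rw [eq_neg_iff_add_eq_zero] at h; exact h)
  by_cases hnb : -b ∈ A
  · have h0 : (0 : G) ∈ A := by
      have := hsum b hbA (-b) hnb hbnb
      simpa using this
    refine ⟨b, Or.inr (Or.inr ?_)⟩
    ext x
    simp only [Finset.coe_insert, Set.mem_insert_iff, Finset.mem_coe, Set.mem_singleton_iff]
    constructor
    · exact fun hx => key x hx
    · rintro (rfl | rfl | rfl) <;> assumption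
  · by_cases h0 : (0 : G) ∈ A
    · refine ⟨b, Or.inr (Or.inl ?_)⟩
      ext x
      simp only [Finset.coe_insert, Set.mem_insert_iff, Finset.mem_coe, Set.mem_singleton_iff]
      constructor
      · intro hx
        rcases key x hx with h | h | h
        · exact Or.inl h
        · exact Or.inr h
        · exact absurd (h ▸ hx) hnb
      · rintro (rfl | rfl) <;> assumption
    · refine ⟨b, Or.inl ?_⟩
      ext x
      simp only [Finset.mem_coe, Set.mem_singleton_iff]
      constructor
      · intro hx
        rcases key x hx with h | h | h
        · exact h
        · exact absurd (h ▸ hx) h0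
        · exact absurd (h ▸ hx) hnb
      · rintro rfl; assumption
end

section
/- Let n ≥ 4, G = ℤ/2ⁿℤ, and A = { (4m+1)·2ʲ mod 2ⁿ : m ∈ ℤ, 0 ≤ j ≤ n−2 }. Then there do not exist five distinct elements a₁, …, a₅ ∈ A such that aᵢ + aⱼ ∉ A for all 1 ≤ i < j ≤ 5. In other words, φ(A) ≤ 4. -/
theorem stmt_8 (n : ℕ) (hn : 4 ≤ n)
    (A : Set (ZMod (2 ^ n)))
    (hA : A = {x | ∃ m : ℤ, ∃ j : ℕ, j ≤ n - 2 ∧ x = (((4 * m + 1) * 2 ^ j : ℤ) : ZMod (2 ^ n))}) :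
    ¬ ∃ a : Fin 5 → ZMod (2 ^ n), Function.Injective a ∧ (∀ i, a i ∈ A) ∧
      ∀ i j, i ≠ j → a i + a j ∉ A := by
  rintro ⟨a, hinj, hmem, hsum⟩
  obtain ⟨p, rfl⟩ : ∃ p, n = p + 2 := ⟨n - 2, by omega⟩
  have hns : p + 2 - 2 = p := by omega
  rw [hns] at hA
  subst hA
  choose m j hj ha using hmem
  obtain ⟨i0, hi0⟩ := Finite.exists_min j
  have hle : ∀ i, j i ≤ j i0 + 1 := by
    intro i
    by_contra h
    push_neg at h
    obtain ⟨e, he⟩ : ∃ e, j i = j i0 + e + 2 := ⟨j i - j i0 - 2, by omega⟩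
    have hne : i0 ≠ i := by intro hh; rw [hh] at he; omega
    apply hsum i0 i hne
    refine ⟨m i0 + (4 * m i + 1) * 2 ^ e, j i0, hj i0, ?_⟩
    rw [ha i0, ha i, he]
    push_cast
    ring
  set f : Fin 5 → Bool × Bool := fun i => (decide (j i = j i0), decide (m i % 2 = 0)) with hf
  have hcard : Fintype.card (Bool × Bool) < Fintype.card (Fin 5) := by simp
  obtain ⟨i, k, hik, hfik⟩ := Fintype.exists_ne_map_eq_of_card_lt f hcard
  have h1 := congrArg Prod.fst hfik
  have h2 := congrArg Prod.snd hfik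
  simp only [hf, decide_eq_decide] at h1 h2
  have hjeq : j i = j k := by
    have := hle i; have := hle k; have := hi0 i; have := hi0 k
    by_cases hc : j i = j i0
    · omega
    · have : ¬ (j k = j i0) := fun hh => hc (h1.mpr hh)
      omega
  have hmeq : m i % 2 = m k % 2 := by omega
  by_cases hcase : j i = p
  · apply hik
    apply hinj
    have h0 : ((2 : ZMod (2^(p+2))))^(p+2) = 0 := by
      have := ZMod.natCast_self (2^(p+2)); push_cast at this; exact this
    have key : ∀ t : ℤ, (((4 * t + 1) * 2 ^ p : ℤ) : ZMod (2^(p+2))) = 2^p := by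
      intro t
      have : ((4 * t + 1) * 2 ^ p : ℤ) = t * 2^(p+2) + 2^p := by
        rw [pow_add]; ring
      rw [this]
      push_cast
      rw [h0]
      ring
    rw [ha i, ha k, ← hjeq, hcase, key, key]
  · obtain ⟨M, hM⟩ : ∃ M : ℤ, m i + m k = 2 * M := ⟨(m i + m k)/2, by omega⟩
    apply hsum i k hik
    refine ⟨M, j i + 1, by have := hj i; omega, ?_⟩
    rw [ha i, ha k, ← hjeq]
    have : ((4 * m i + 1) * 2 ^ (j i) + (4 * m k + 1) * 2 ^ (j i) : ℤ)
        = (4 * M + 1) * 2 ^ (j i + 1) := by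
      rw [pow_succ]
      linear_combination 4 * (2:ℤ)^(j i) * hM
    rw [← this]
    push_cast
    ring
end

section
/- Let n ≥ 4, G = ℤ/2ⁿℤ, and A = { (4m+1)·2ʲ mod 2ⁿ : 0 ≤ j ≤ n−2 }. Then the set B = {1, 2, 5, 10} (mod 2ⁿ) is sum-avoiding in A: all four elements lie in A, and the sum of any two distinct elements of B lies outside A. Hence φ(A) ≥ 4. -/
lemma aux_stmt9 (m : ZMod 16) (j : ℕ) :
    (4 * m + 1) * 2 ^ j ∉ ({3, 6, 7, 11, 12, 15} : Finset (ZMod 16)) := by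
  have h2 : (2 : ZMod 16) ^ j ∈ ({1, 2, 4, 8, 0} : Finset (ZMod 16)) := by
    induction j with
    | zero => decide
    | succ k ih =>
      rw [pow_succ]
      revert ih
      generalize (2 : ZMod 16) ^ k = c
      revert c
      decide
  revert h2
  generalize (2 : ZMod 16) ^ j = c
  revert m c
  decide

theorem stmt_9 (n : ℕ) (hn : 4 ≤ n)
    (A : Set (ZMod (2 ^ n)))
    (hA : A = {x | ∃ m : ℤ, ∃ j : ℕ, j ≤ n - 2 ∧ x = (((4 * m + 1) * 2 ^ j : ℤ) : ZMod (2 ^ n))}) :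
    ({1, 2, 5, 10} : Set (ZMod (2 ^ n))) ⊆ A ∧
      ∀ b₁ ∈ ({1, 2, 5, 10} : Set (ZMod (2 ^ n))),
        ∀ b₂ ∈ ({1, 2, 5, 10} : Set (ZMod (2 ^ n))), b₁ ≠ b₂ → b₁ + b₂ ∉ A := by
  subst hA
  have hdvd : (16 : ℕ) ∣ 2 ^ n := by
    have : (16 : ℕ) = 2 ^ 4 := by norm_num
    rw [this]; exact pow_dvd_pow 2 hn
  set f := ZMod.castHom hdvd (ZMod 16) with hfdef
  constructor
  · intro x hx
    have h0 : (0 : ℕ) ≤ n - 2 := Nat.zero_le _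
    have h1 : (1 : ℕ) ≤ n - 2 := by omega
    simp only [Set.mem_insert_iff, Set.mem_singleton_iff] at hx
    rcases hx with rfl | rfl | rfl | rfl
    · exact ⟨0, 0, h0, by push_cast; ring⟩
    · exact ⟨0, 1, h1, by push_cast; ring⟩
    · exact ⟨1, 0, h0, by push_cast; ring⟩
    · exact ⟨1, 1, h1, by push_cast; ring⟩
  · rintro b₁ hb₁ b₂ hb₂ hne ⟨m, j, hj, hx⟩
    have hf : f (b₁ + b₂) = (4 * (m : ZMod 16) + 1) * 2 ^ j := by
      rw [hx, map_intCast]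
      push_cast
      ring
    have haux := aux_stmt9 (m : ZMod 16) j
    rw [← hf] at haux
    apply haux
    simp only [Set.mem_insert_iff, Set.mem_singleton_iff] at hb₁ hb₂
    rcases hb₁ with rfl | rfl | rfl | rfl <;> rcases hb₂ with rfl | rfl | rfl | rfl <;>
      first
      | exact absurd rfl hne
      | simp only [map_add, map_one, map_ofNat]; decide
end

section
/- Let H be a finite additive abelian group, G = (ℤ/7ℤ) × H, A₀ = {1, 2, 4} ⊆ ℤ/7ℤ, and A = A₀ × H. Then there do not exist four distinct elements a₁, a₂, a₃, a₄ ∈ A such that aᵢ + aⱼ ∉ A for all 1 ≤ i < j ≤ 4. That is, φ(A) ≤ 3. -/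
theorem stmt_10 {H : Type*} [AddCommGroup H] [Fintype H]
    (A : Set (ZMod 7 × H))
    (hA : A = {p : ZMod 7 × H | p.1 ∈ ({1, 2, 4} : Set (ZMod 7))}) :
    ¬ ∃ a : Fin 4 → ZMod 7 × H, Function.Injective a ∧ (∀ i, a i ∈ A) ∧
      ∀ i j, i ≠ j → a i + a j ∉ A := by
  rintro ⟨a, -, h2, h3⟩
  subst hA
  have hmem : ∀ i, (a i).1 ∈ ({1, 2, 4} : Finset (ZMod 7)) := by
    intro i
    have := h2 i
    simp only [Set.mem_setOf_eq, Set.mem_insert_iff, Set.mem_singleton_iff] at this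
    simp only [Finset.mem_insert, Finset.mem_singleton]
    exact this
  have hcard : ({1, 2, 4} : Finset (ZMod 7)).card < Fintype.card (Fin 4) := by decide
  obtain ⟨i, -, j, -, hij, hfij⟩ :=
    Finset.exists_ne_map_eq_of_card_lt_of_maps_to (s := (Finset.univ : Finset (Fin 4))) (t := ({1, 2, 4} : Finset (ZMod 7)))
      (by simpa [Finset.card_univ] using hcard) (fun i _ => hmem i)
  apply h3 i j hij
  have hi := hmem i
  simp only [Finset.mem_insert, Finset.mem_singleton] at hi
  simp only [Set.mem_setOf_eq, Prod.fst_add, hfij, Set.mem_insert_iff, Set.mem_singleton_iff]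
  rcases hi with h | h | h <;> rw [hfij] at * <;> rw [h] <;> decide
end

section
/- Every finite set A of n ≥ 1 positive real numbers contains a subset B with |B| ≥ H_n = Σ_{j=1}^{n} 1/j (the n-th harmonic number, which is ≥ ln n) such that b₁ + b₂ ∉ A for all distinct b₁, b₂ ∈ B. -/
/-!
Join two distinct elements of `A` when their sum lies in `A`; sum-avoiding subsets are the
independent sets of this graph. As the elements of `A` are positive, `b ↦ a + b` maps the
neighbours of `a` injectively to elements of `A` above `a`, so the `j`-th smallest element has
degree at most `n - j`. The Caro–Wei bound `α(G) ≥ ∑ᵥ 1 / (deg v + 1)` (greedily: keep a vertex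
of minimum degree, delete its closed neighbourhood, recurse) then yields an independent set of
size at least `∑ⱼ 1 / (n - j + 1) = H_n`.
-/

open Finset

theorem Finset.sum_card_filter_lt {α M : Type*} [LinearOrder α] [AddCommMonoid M]
    (s : Finset α) (f : ℕ → M) :
    ∑ a ∈ s, f #{b ∈ s | a < b} = ∑ k ∈ range #s, f k := by
  set rank : α → ℕ := fun a => #{b ∈ s | a < b}
  have hanti : StrictAntiOn rank s := fun a _ b hb hab => card_lt_card <|
    ssubset_iff_of_subset (monotone_filter_right s fun _ _ => hab.trans) |>.mpr
      ⟨b, mem_filter.mpr ⟨hb, hab⟩, fun h => (mem_filter.mp h).2.false⟩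
  have hrange : s.image rank = range #s := by
    refine eq_of_subset_of_card_le (image_subset_iff.mpr fun a ha => ?_) ?_
    · exact mem_range.mpr (card_lt_card (filter_ssubset.mpr ⟨a, ha, lt_irrefl a⟩))
    · rw [card_range, card_image_of_injOn hanti.injOn]
  rw [← hrange, sum_image hanti.injOn]

def sumGraph {α : Type*} [AddCommMagma α] (A : Set α) : SimpleGraph α where
  Adj x y := x ≠ y ∧ x + y ∈ A
  symm := ⟨fun x y h => ⟨h.1.symm, add_comm x y ▸ h.2⟩⟩
  loopless := ⟨fun _ h => h.1 rfl⟩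

instance {α : Type*} [AddCommMagma α] [DecidableEq α] (A : Finset α) :
    DecidableRel (sumGraph (A : Set α)).Adj :=
  fun x y => inferInstanceAs (Decidable (x ≠ y ∧ x + y ∈ A))

namespace SimpleGraph

variable {V : Type*} (G : SimpleGraph V) [DecidableRel G.Adj]

def degreeIn (s : Finset V) (v : V) : ℕ := #{w ∈ s | G.Adj v w}

lemma degreeIn_mono {s t : Finset V} (hst : s ⊆ t) (v : V) : G.degreeIn s v ≤ G.degreeIn t v :=
  card_le_card (filter_subset_filter _ hst)

variable [DecidableEq V]

lemma card_insert_filter_adj (s : Finset V) (v : V) :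
    #(insert v {w ∈ s | G.Adj v w}) = G.degreeIn s v + 1 :=
  card_insert_of_notMem fun hv => G.irrefl (mem_filter.mp hv).2

lemma sum_inv_degreeIn_insert_filter_adj_le_one {s : Finset V} {v : V} (hv : v ∈ s)
    (hmin : ∀ w ∈ s, G.degreeIn s v ≤ G.degreeIn s w) :
    ∑ w ∈ insert v {w ∈ s | G.Adj v w}, ((G.degreeIn s w : ℝ) + 1)⁻¹ ≤ 1 := by
  calc ∑ w ∈ insert v {w ∈ s | G.Adj v w}, ((G.degreeIn s w : ℝ) + 1)⁻¹
      ≤ ∑ _w ∈ insert v {w ∈ s | G.Adj v w}, ((G.degreeIn s v : ℝ) + 1)⁻¹ := by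
        refine sum_le_sum fun w hw => ?_
        have hws : w ∈ s := by
          rcases mem_insert.mp hw with rfl | hw
          exacts [hv, (mem_filter.mp hw).1]
        gcongr
        exact hmin w hws
    _ = 1 := by
        rw [sum_const, card_insert_filter_adj, nsmul_eq_mul]
        push_cast
        exact mul_inv_cancel₀ (by positivity)

theorem exists_isIndepSet_subset_sum_inv_degreeIn_le (s : Finset V) :
    ∃ t ⊆ s, G.IsIndepSet (t : Set V) ∧ ∑ v ∈ s, ((G.degreeIn s v : ℝ) + 1)⁻¹ ≤ #t := by
  induction s using Finset.strongInduction with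
  | H s ih =>
  obtain rfl | hs := s.eq_empty_or_nonempty
  · exact ⟨∅, subset_rfl, by simp, by simp⟩
  obtain ⟨v, hv, hmin⟩ := s.exists_min_image (G.degreeIn s) hs
  set N := insert v {w ∈ s | G.Adj v w}
  have hNs : N ⊆ s := insert_subset hv (filter_subset _ _)
  obtain ⟨t, hts, ht, hsum⟩ := ih (s \ N) (sdiff_ssubset hNs ⟨v, mem_insert_self v _⟩)
  have hvt : v ∉ t := fun h => (mem_sdiff.mp (hts h)).2 (mem_insert_self v _)
  have hnadj : ∀ w ∈ t, ¬G.Adj v w := fun w hw hvw =>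
    have ⟨hws, hwN⟩ := mem_sdiff.mp (hts hw)
    hwN (mem_insert_of_mem (mem_filter.mpr ⟨hws, hvw⟩))
  refine ⟨insert v t, insert_subset hv (hts.trans sdiff_subset), ?_, ?_⟩
  · rw [coe_insert, isIndepSet_iff, Set.pairwise_insert]
    exact ⟨ht, fun w hw _ => ⟨hnadj w hw, fun hwv => hnadj w hw hwv.symm⟩⟩
  have hdeg : ∑ w ∈ s \ N, ((G.degreeIn s w : ℝ) + 1)⁻¹ ≤
      ∑ w ∈ s \ N, ((G.degreeIn (s \ N) w : ℝ) + 1)⁻¹ :=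
    sum_le_sum fun w _ => by
      gcongr
      exact G.degreeIn_mono sdiff_subset w
  calc ∑ w ∈ s, ((G.degreeIn s w : ℝ) + 1)⁻¹
      = ∑ w ∈ s \ N, ((G.degreeIn s w : ℝ) + 1)⁻¹ + ∑ w ∈ N, ((G.degreeIn s w : ℝ) + 1)⁻¹ :=
        (sum_sdiff hNs).symm
    _ ≤ #t + 1 :=
        add_le_add (hdeg.trans hsum) (G.sum_inv_degreeIn_insert_filter_adj_le_one hv hmin)
    _ = #(insert v t) := by rw [card_insert_of_notMem hvt, Nat.cast_succ]

end SimpleGraph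

theorem sumGraph_degreeIn_le {α : Type*} [AddCommMonoid α] [LinearOrder α]
    [IsOrderedCancelAddMonoid α] {A : Finset α} (hA : ∀ a ∈ A, 0 < a) (a : α) :
    (sumGraph (A : Set α)).degreeIn A a ≤ #{b ∈ A | a < b} := by
  refine card_le_card_of_injOn (a + ·) (fun b hb => ?_) (add_right_injective a).injOn
  obtain ⟨hbA, -, hab⟩ := mem_filter.mp hb
  exact mem_filter.mpr ⟨hab, lt_add_of_pos_right a (hA b hbA)⟩

theorem stmt_14_general (n : ℕ) (A : Finset ℝ) (hcard : A.card = n)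
    (hpos : ∀ a ∈ A, 0 < a) :
    ∃ B ⊆ A, (∑ j ∈ Finset.Icc 1 n, (1 : ℝ) / j) ≤ B.card ∧
      ∀ b₁ ∈ B, ∀ b₂ ∈ B, b₁ ≠ b₂ → b₁ + b₂ ∉ A := by
  obtain ⟨B, hBA, hB, hsum⟩ :=
    (sumGraph (A : Set ℝ)).exists_isIndepSet_subset_sum_inv_degreeIn_le A
  refine ⟨B, hBA, ?_, fun b₁ h₁ b₂ h₂ hne hA => hB h₁ h₂ hne ⟨hne, hA⟩⟩
  calc ∑ j ∈ Icc 1 n, (1 : ℝ) / j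
      = ∑ k ∈ range n, ((k : ℝ) + 1)⁻¹ := by
        rw [range_eq_Ico, ← Ico_add_one_right_eq_Icc, ← zero_add 1, ← sum_Ico_add']
        simp
    _ = ∑ a ∈ A, ((#{b ∈ A | a < b} : ℝ) + 1)⁻¹ := by
        rw [sum_card_filter_lt A fun k => ((k : ℝ) + 1)⁻¹, hcard]
    _ ≤ ∑ a ∈ A, (((sumGraph (A : Set ℝ)).degreeIn A a : ℝ) + 1)⁻¹ :=
        sum_le_sum fun a _ => by
          gcongr
          exact sumGraph_degreeIn_le hpos a
    _ ≤ #B := hsum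

theorem stmt_14 (n : ℕ) (hn : 1 ≤ n) (A : Finset ℝ) (hcard : A.card = n)
    (hpos : ∀ a ∈ A, 0 < a) :
    ∃ B ⊆ A, (∑ j ∈ Finset.Icc 1 n, (1 : ℝ) / j) ≤ B.card ∧
      ∀ b₁ ∈ B, ∀ b₂ ∈ B, b₁ ≠ b₂ → b₁ + b₂ ∉ A :=
  stmt_14_general n A hcard hpos
end

section
/- Let G be a finite additive abelian group and A ⊆ G with φ(A) < 2 and |A| ≥ 4. Then there exist a₁, a₂ ∈ A with a₁ + a₂ = 0. -/
noncomputable def phi {G : Type*} [AddCommGroup G] [DecidableEq G] (A : Finset G) : ℕ :=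
  Finset.sup (A.powerset.filter
    (fun B => ∀ b₁ ∈ B, ∀ b₂ ∈ B, b₁ ≠ b₂ → b₁ + b₂ ∉ A)) Finset.card

theorem stmt_16 {G : Type*} [AddCommGroup G] [Fintype G] [DecidableEq G]
    (A : Finset G) (hphi : phi A < 2) (hcard : 4 ≤ A.card) :
    ∃ a₁ ∈ A, ∃ a₂ ∈ A, a₁ + a₂ = 0 := by
  -- Key: any two distinct elements of A sum into A
  have key : ∀ a ∈ A, ∀ b ∈ A, a ≠ b → a + b ∈ A := by
    intro a ha b hb hab
    by_contra hsum
    have h2 : 2 ≤ phi A := by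
      unfold phi
      have hc2 : ({a, b} : Finset G).card = 2 := by
        rw [Finset.card_insert_of_notMem (by simpa using hab), Finset.card_singleton]
      rw [← hc2]
      apply Finset.le_sup
      simp only [Finset.mem_filter, Finset.mem_powerset]
      constructor
      · intro x hx
        rcases Finset.mem_insert.mp hx with h | h
        · exact h ▸ ha
        · exact (Finset.mem_singleton.mp h) ▸ hb
      · intro b₁ h₁ b₂ h₂ hne
        simp only [Finset.mem_insert, Finset.mem_singleton] at h₁ h₂
        rcases h₁ with rfl | rfl <;> rcases h₂ with rfl | rfl
        · exact absurd rfl hne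
        · exact hsum
        · rw [add_comm]; exact hsum
        · exact absurd rfl hne
    omega
  by_cases h0 : (0 : G) ∈ A
  · exact ⟨0, h0, 0, h0, add_zero 0⟩
  -- pick two distinct elements
  obtain ⟨a, ha, b, hb, hab⟩ := Finset.one_lt_card.mp (show 1 < A.card by omega)
  -- For any x ∈ A and distinct y ∈ A, y - x ∈ A
  have diff : ∀ x ∈ A, ∀ y ∈ A, x ≠ y → y - x ∈ A := by
    intro x hx y hy hxy
    have himg : Finset.image (fun c => x + c) (A.erase x) = A.erase x := by
      apply Finset.eq_of_subset_of_card_le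
      · intro z hz
        simp only [Finset.mem_image] at hz
        obtain ⟨c, hc, rfl⟩ := hz
        have hcA := Finset.mem_of_mem_erase hc
        have hcx : c ≠ x := Finset.ne_of_mem_erase hc
        refine Finset.mem_erase.mpr ⟨?_, key x hx c hcA (fun h => hcx h.symm)⟩
        intro h
        have hc0 : c = 0 := add_eq_left.mp h
        exact h0 (hc0 ▸ hcA)
      · rw [Finset.card_image_of_injective _ (add_right_injective x)]
    have hyS : y ∈ A.erase x := Finset.mem_erase.mpr ⟨fun h => hxy h.symm, hy⟩
    rw [← himg] at hyS
    simp only [Finset.mem_image] at hyS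
    obtain ⟨c, hc, hcy⟩ := hyS
    have : c = y - x := by rw [← hcy]; abel
    exact this ▸ Finset.mem_of_mem_erase hc
  refine ⟨b - a, diff a ha b hb hab, a - b, diff b hb a ha hab.symm, by abel⟩
end
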